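/- Let n ≥ 1, σ > 1, δ ∈ (0,1], M > 0, and let ψ ∈ H^{σ+1}(ℝⁿ) (so B = ∇ψ ∈ H^{σ}) satisfy |ξ|² |ψ̂(ξ)| ≤ C₀ (1 + |ξ|²)² δ for all ξ ∈ ℝⁿ and ‖∇ψ‖_{H^{σ}(ℝⁿ)} ≤ M. Then there exists C > 0 depending only on n, M, C₀ such that ‖Δψ‖_{L²(ℝⁿ)} ≤ C δ^{2(σ−1)/(2σ+n+6)}. -/

import Mathlib

/-!
Split frequency space at `⟨ξ⟩ = R`, where `⟨ξ⟩² = 1 + |ξ|²` and `G` plays the role of `ψ̂`.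
On `⟨ξ⟩ ≤ R` the pointwise bound gives `|ξ|⁴|G|² ≤ (C₀ δ R⁴)²` on a set of volume `O(Rⁿ)`,
so this part contributes `O(δ² R^{n+8})`. On `⟨ξ⟩ > R` one has `|ξ|² ≤ R^{2(1-σ)} ⟨ξ⟩^{2σ}`,
so this part is at most `R^{2(1-σ)} M²`. The choice `R = δ^{-2/(2σ+n+6)}` makes both
contributions equal to `δ^{4(σ-1)/(2σ+n+6)}`.
-/

open MeasureTheory ENNReal Metric Module

theorem lintegral_le_mul_measure_add_mul_lintegral {α : Type*} [MeasurableSpace α]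
    {μ : Measure α} {S : Set α} (hS : MeasurableSet S) {f g : α → ℝ≥0∞} {a b : ℝ≥0∞}
    (hb : b ≠ ∞) (hf_mem : ∀ x ∈ S, f x ≤ a) (hf_not_mem : ∀ x ∉ S, f x ≤ b * g x) :
    ∫⁻ x, f x ∂μ ≤ a * μ S + b * ∫⁻ x, g x ∂μ := by
  calc ∫⁻ x, f x ∂μ ≤ ∫⁻ x, S.indicator (fun _ ↦ a) x + b * g x ∂μ := by
        refine lintegral_mono fun x ↦ ?_
        by_cases hx : x ∈ S
        · simpa only [Set.indicator_of_mem hx] using (hf_mem x hx).trans le_self_add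
        · exact (hf_not_mem x hx).trans le_add_self
    _ = a * μ S + b * ∫⁻ x, g x ∂μ := by
        rw [lintegral_add_left (measurable_const.indicator hS), lintegral_indicator_const hS,
          lintegral_const_mul' _ _ hb]

theorem Real.le_rpow_one_sub_mul_rpow {a b σ : ℝ} (ha : 0 < a) (hab : a ≤ b) (hσ : 1 ≤ σ) :
    b ≤ a ^ (1 - σ) * b ^ σ := by
  have hb : 0 < b := ha.trans_le hab
  calc b = b ^ (1 - σ) * b ^ σ := by rw [← Real.rpow_add hb, sub_add_cancel, Real.rpow_one]
    _ ≤ a ^ (1 - σ) * b ^ σ := by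
        gcongr ?_ * _
        exact Real.rpow_le_rpow_of_nonpos ha hab (by linarith)

section FrequencySplitting

variable {E F : Type*} [NormedAddCommGroup E] [NormedAddCommGroup F]

theorem norm_pow_four_mul_sq_le_of_le {G : E → F} {ε R : ℝ}
    (hG : ∀ ξ, ‖ξ‖ ^ 2 * ‖G ξ‖ ≤ ε * (1 + ‖ξ‖ ^ 2) ^ 2) {ξ : E} (hξ : 1 + ‖ξ‖ ^ 2 ≤ R ^ 2) :
    ‖ξ‖ ^ 4 * ‖G ξ‖ ^ 2 ≤ (ε * R ^ 4) ^ 2 := by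
  have hε : 0 ≤ ε := by simpa using hG 0
  have hlow : ‖ξ‖ ^ 2 * ‖G ξ‖ ≤ ε * R ^ 4 :=
    calc ‖ξ‖ ^ 2 * ‖G ξ‖ ≤ ε * (1 + ‖ξ‖ ^ 2) ^ 2 := hG ξ
      _ ≤ ε * (R ^ 2) ^ 2 := by gcongr
      _ = ε * R ^ 4 := by ring
  calc ‖ξ‖ ^ 4 * ‖G ξ‖ ^ 2 = (‖ξ‖ ^ 2 * ‖G ξ‖) ^ 2 := by ring
    _ ≤ (ε * R ^ 4) ^ 2 := by gcongr

theorem norm_pow_four_mul_sq_le_of_lt {G : E → F} {σ R : ℝ} (hσ : 1 ≤ σ) (hR : 0 < R)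
    {ξ : E} (hξ : R ^ 2 < 1 + ‖ξ‖ ^ 2) :
    ‖ξ‖ ^ 4 * ‖G ξ‖ ^ 2 ≤ R ^ (2 * (1 - σ)) * ((1 + ‖ξ‖ ^ 2) ^ σ * ‖ξ‖ ^ 2 * ‖G ξ‖ ^ 2) := by
  have hweight : ‖ξ‖ ^ 2 ≤ R ^ (2 * (1 - σ)) * (1 + ‖ξ‖ ^ 2) ^ σ :=
    calc ‖ξ‖ ^ 2 ≤ 1 + ‖ξ‖ ^ 2 := by linarith
      _ ≤ (R ^ 2) ^ (1 - σ) * (1 + ‖ξ‖ ^ 2) ^ σ :=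
          Real.le_rpow_one_sub_mul_rpow (by positivity) hξ.le hσ
      _ = R ^ (2 * (1 - σ)) * (1 + ‖ξ‖ ^ 2) ^ σ := by
          rw [← Real.rpow_natCast, ← Real.rpow_mul hR.le, Nat.cast_ofNat]
  calc ‖ξ‖ ^ 4 * ‖G ξ‖ ^ 2 = ‖ξ‖ ^ 2 * (‖ξ‖ ^ 2 * ‖G ξ‖ ^ 2) := by ring
    _ ≤ (R ^ (2 * (1 - σ)) * (1 + ‖ξ‖ ^ 2) ^ σ) * (‖ξ‖ ^ 2 * ‖G ξ‖ ^ 2) := by gcongr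
    _ = R ^ (2 * (1 - σ)) * ((1 + ‖ξ‖ ^ 2) ^ σ * ‖ξ‖ ^ 2 * ‖G ξ‖ ^ 2) := by ring

theorem lintegral_norm_pow_four_mul_sq_le [NormedSpace ℝ E] [FiniteDimensional ℝ E]
    [MeasurableSpace E] [BorelSpace E] (μ : Measure E) [μ.IsAddHaarMeasure] {G : E → F}
    {ε σ R : ℝ} (hσ : 1 ≤ σ) (hR : 0 < R)
    (hG : ∀ ξ, ‖ξ‖ ^ 2 * ‖G ξ‖ ≤ ε * (1 + ‖ξ‖ ^ 2) ^ 2) :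
    ∫⁻ ξ, ENNReal.ofReal (‖ξ‖ ^ 4 * ‖G ξ‖ ^ 2) ∂μ
      ≤ ENNReal.ofReal ((ε * R ^ 4) ^ 2 * R ^ finrank ℝ E) * μ (ball 0 1)
        + ENNReal.ofReal (R ^ (2 * (1 - σ)))
          * ∫⁻ ξ, ENNReal.ofReal ((1 + ‖ξ‖ ^ 2) ^ σ * ‖ξ‖ ^ 2 * ‖G ξ‖ ^ 2) ∂μ := by
  set S : Set E := {ξ | 1 + ‖ξ‖ ^ 2 ≤ R ^ 2}
  have hS : MeasurableSet S := measurableSet_le (by fun_prop) measurable_const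
  have hS_ball : S ⊆ closedBall 0 R := by
    intro ξ (hξ : 1 + ‖ξ‖ ^ 2 ≤ R ^ 2)
    rw [mem_closedBall_zero_iff]
    nlinarith [norm_nonneg ξ]
  calc ∫⁻ ξ, ENNReal.ofReal (‖ξ‖ ^ 4 * ‖G ξ‖ ^ 2) ∂μ
      ≤ ENNReal.ofReal ((ε * R ^ 4) ^ 2) * μ S + ENNReal.ofReal (R ^ (2 * (1 - σ)))
          * ∫⁻ ξ, ENNReal.ofReal ((1 + ‖ξ‖ ^ 2) ^ σ * ‖ξ‖ ^ 2 * ‖G ξ‖ ^ 2) ∂μ := by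
        refine lintegral_le_mul_measure_add_mul_lintegral hS ofReal_ne_top
          (fun ξ hξ ↦ ofReal_le_ofReal (norm_pow_four_mul_sq_le_of_le hG hξ))
          (fun ξ hξ ↦ ?_)
        rw [← ofReal_mul (by positivity)]
        exact ofReal_le_ofReal (norm_pow_four_mul_sq_le_of_lt hσ hR (not_le.mp hξ))
    _ ≤ ENNReal.ofReal ((ε * R ^ 4) ^ 2) * μ (closedBall 0 R) + _ := by
        gcongr
    _ = _ := by
        rw [Measure.addHaar_closedBall μ 0 hR.le, ← mul_assoc, ← ofReal_mul (by positivity)]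

end FrequencySplitting

theorem rpow_neg_two_div_rpow_one_sub {δ σ d : ℝ} (hδ : 0 < δ) (hs : 2 * σ + d + 6 ≠ 0) :
    (δ ^ (-(2 / (2 * σ + d + 6)))) ^ (2 * (1 - σ))
      = (δ ^ (2 * (σ - 1) / (2 * σ + d + 6))) ^ 2 := by
  rw [← Real.rpow_mul hδ.le, ← Real.rpow_natCast, ← Real.rpow_mul hδ.le]
  congr 1
  field_simp
  push_cast
  ring

theorem sq_mul_rpow_neg_two_div_rpow_add_eight {δ σ d : ℝ} (hδ : 0 < δ)
    (hs : 2 * σ + d + 6 ≠ 0) :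
    δ ^ 2 * (δ ^ (-(2 / (2 * σ + d + 6)))) ^ (d + 8)
      = (δ ^ (2 * (σ - 1) / (2 * σ + d + 6))) ^ 2 := by
  rw [← Real.rpow_mul hδ.le, ← Real.rpow_natCast, ← Real.rpow_natCast, ← Real.rpow_mul hδ.le,
    ← Real.rpow_add hδ]
  congr 1
  field_simp
  push_cast
  ring

theorem stmt_16_general (n : ℕ) (σ : ℝ) (hσ : 1 < σ)
    (M C₀ : ℝ) (hM : 0 < M) :
    ∃ C : ℝ, 0 < C ∧ ∀ δ : ℝ, δ ∈ Set.Ioc (0 : ℝ) 1 →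
      ∀ G : EuclideanSpace ℝ (Fin n) → ℂ,
      (∀ ξ, ‖ξ‖ ^ 2 * ‖G ξ‖ ≤ C₀ * (1 + ‖ξ‖ ^ 2) ^ 2 * δ) →
      (∫⁻ ξ : EuclideanSpace ℝ (Fin n),
          ENNReal.ofReal ((1 + ‖ξ‖ ^ 2) ^ σ * ‖ξ‖ ^ 2 * ‖G ξ‖ ^ 2)
        ≤ ENNReal.ofReal (M ^ 2)) →
      (∫⁻ ξ : EuclideanSpace ℝ (Fin n),
          ENNReal.ofReal (‖ξ‖ ^ 4 * ‖G ξ‖ ^ 2))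
        ≤ ENNReal.ofReal ((C * δ ^ (2 * (σ - 1) / (2 * σ + n + 6))) ^ 2) := by
  set V := (volume (ball (0 : EuclideanSpace ℝ (Fin n)) 1)).toReal
  have hV : volume (ball (0 : EuclideanSpace ℝ (Fin n)) 1) = ENNReal.ofReal V :=
    (ofReal_toReal measure_ball_lt_top.ne).symm
  refine ⟨√(C₀ ^ 2 * V + M ^ 2), by positivity, ?_⟩
  rintro δ ⟨hδ, -⟩ G hG hGM
  have hs : 2 * σ + n + 6 ≠ 0 := by positivity
  set θ := 2 * (σ - 1) / (2 * σ + n + 6)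
  set R := δ ^ (-(2 / (2 * σ + n + 6)))
  have hlow : (C₀ * δ * R ^ 4) ^ 2 * R ^ n = C₀ ^ 2 * (δ ^ θ) ^ 2 := by
    rw [← sq_mul_rpow_neg_two_div_rpow_add_eight hδ hs, Real.rpow_add (by positivity)]
    norm_cast
    ring
  have hhigh : R ^ (2 * (1 - σ)) = (δ ^ θ) ^ 2 := rpow_neg_two_div_rpow_one_sub hδ hs
  have hsplit := lintegral_norm_pow_four_mul_sq_le volume (G := G) (ε := C₀ * δ) hσ.le
    (by positivity : 0 < R) fun ξ ↦ by linarith [hG ξ]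
  rw [finrank_euclideanSpace_fin, hlow, hhigh, hV] at hsplit
  grw [hGM] at hsplit
  refine hsplit.trans_eq ?_
  rw [← ofReal_mul (by positivity), ← ofReal_mul (by positivity),
    ← ofReal_add (by positivity) (by positivity), mul_pow, Real.sq_sqrt (by positivity)]
  congr 1
  ring

/-- stability estimate for `‖Δψ‖_{L²}` by frequency splitting,
stated on the Fourier side: if `|ξ|²|ψ̂(ξ)| ≤ C₀(1+|ξ|²)²δ` pointwise and
`‖∇ψ‖_{H^σ} ≤ M`, then `‖Δψ‖_{L²} ≤ C δ^{2(σ−1)/(2σ+n+6)}` with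
`C = C(n, M, C₀)`. -/
theorem stmt_16 (n : ℕ) (hn : 1 ≤ n) (σ : ℝ) (hσ : 1 < σ)
    (M C₀ : ℝ) (hM : 0 < M) (hC₀ : 0 < C₀) :
    ∃ C : ℝ, 0 < C ∧ ∀ δ : ℝ, δ ∈ Set.Ioc (0 : ℝ) 1 →
      ∀ G : EuclideanSpace ℝ (Fin n) → ℂ,
      (∀ ξ, ‖ξ‖ ^ 2 * ‖G ξ‖ ≤ C₀ * (1 + ‖ξ‖ ^ 2) ^ 2 * δ) →
      (∫⁻ ξ : EuclideanSpace ℝ (Fin n),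
          ENNReal.ofReal ((1 + ‖ξ‖ ^ 2) ^ σ * ‖ξ‖ ^ 2 * ‖G ξ‖ ^ 2)
        ≤ ENNReal.ofReal (M ^ 2)) →
      (∫⁻ ξ : EuclideanSpace ℝ (Fin n),
          ENNReal.ofReal (‖ξ‖ ^ 4 * ‖G ξ‖ ^ 2))
        ≤ ENNReal.ofReal ((C * δ ^ (2 * (σ - 1) / (2 * σ + n + 6))) ^ 2) :=
  stmt_16_general n σ hσ M C₀ hM
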